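/- arXiv:2603.29473 — 2 statements merged into one kernel-verified Lean document; each statement's English description precedes it below -/
import Mathlib

section
/- Fix γ>0, λ>0, f(x)=x^γ, a turning point x*>0, and let (S_k) be the WKB hierarchy defined in the context. Then for every integer k ≥ 2 there exists a constant C_k > 0 such that for all x ≥ x*: |S_k'(x)| ≤ C_k·x^{−(2k−1)γ} if 0<γ≤1, and |S_k'(x)| ≤ C_k·x^{−(kγ+k−1)} if γ>1. Moreover, if 0<γ≤1 and γ = 1/(2k−1) (the resonant case 1−(2k−1)γ=0), then there exist C_k>0 and X ≥ max(x*,2) such that |S_k(x)| ≤ C_k·log(x) for all x ≥ X. -/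
/-!
With `μ = min γ 1`, every `S_k'` (`k ≥ 1`) agrees on `[x*, ∞)` with a finite linear
combination of powers `x ^ p`, all with `p ≤ -(kγ + (k - 1)μ)`. This holds for `S₁' = λ x^{-γ}`
and is preserved by the recurrence: differentiation lowers exponents by `1 ≥ μ`, division by `f`
lowers them by `γ`, and the product terms `S_j' S_{k-j}' / f` have exponents at most
`-(kγ + (k - 2)μ) - γ`, where `γ ≥ μ`. On `[x*, ∞)` such a combination is `O(x ^ q)` for any
upper bound `q` of its exponents. In the resonant case this gives `|S_k'| ≤ C / x`, and
integrating `S_k'` from `x*`, where `S_k` vanishes, gives the logarithm.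
-/

open Real MeasureTheory

/-- The WKB hierarchy on `[x*,∞)` for `f(x) = x^γ` and spectral parameter `λ`:
`S₀(x) = −∫_{x*}^x f(s)/2 ds`, `S₁(x) = ∫_{x*}^x λ/f(s) ds`, and for `k ≥ 2`,
`S_k' = S_{k−1}''/f + f⁻¹·Σ_{j=1}^{k−1} S_j'·S_{k−j}'` with `S_k(x*) = 0`.
Here `S' k` and `S'' k` denote the first and second derivatives of `S k`. -/
structure WKBHierarchy (γ lam xstar : ℝ) (S S' S'' : ℕ → ℝ → ℝ) : Prop where
  deriv1 : ∀ k, ∀ x, xstar ≤ x → HasDerivAt (S k) (S' k x) x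
  deriv2 : ∀ k, ∀ x, xstar ≤ x → HasDerivAt (S' k) (S'' k x) x
  cont2 : ∀ k, ContinuousOn (S'' k) (Set.Ici xstar)
  S0_def : ∀ x, S 0 x = -(∫ s in xstar..x, s ^ γ / 2)
  S1_def : ∀ x, S 1 x = ∫ s in xstar..x, lam / s ^ γ
  recurrence : ∀ k, 2 ≤ k → ∀ x, xstar ≤ x →
    S' k x = S'' (k - 1) x / x ^ γ
      + (1 / x ^ γ) * ∑ j ∈ Finset.Ico 1 k, S' j x * S' (k - j) x
  init : ∀ k, 2 ≤ k → S k xstar = 0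

open Set

section PowerSums

def powerSumsOn (x₀ a : ℝ) : Submodule ℝ (ℝ → ℝ) :=
  Submodule.span ℝ {f | ∃ p ≤ a, EqOn f (fun x => x ^ p) (Ici x₀)}

variable {x₀ a b : ℝ} {f g : ℝ → ℝ}

theorem powerSumsOn_mono (h : a ≤ b) : powerSumsOn x₀ a ≤ powerSumsOn x₀ b :=
  Submodule.span_mono fun _ ⟨p, hp, hf⟩ => ⟨p, hp.trans h, hf⟩

theorem rpow_mem_powerSumsOn {p : ℝ} (hp : p ≤ a) : (fun x => x ^ p) ∈ powerSumsOn x₀ a :=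
  Submodule.subset_span ⟨p, hp, eqOn_refl _ _⟩

theorem mem_powerSumsOn_of_eqOn (hf : f ∈ powerSumsOn x₀ a) (h : EqOn f g (Ici x₀)) :
    g ∈ powerSumsOn x₀ a := by
  -- `g - f` vanishes on `[x₀, ∞)`, so it is the difference of two generators
  have hgen : g - f + (fun x => x ^ a) ∈ powerSumsOn x₀ a :=
    Submodule.subset_span ⟨a, le_rfl, fun x hx => by simp [h hx]⟩
  simpa using add_mem hf (sub_mem hgen (rpow_mem_powerSumsOn (x₀ := x₀) le_rfl))

theorem exists_abs_le_rpow_of_mem_powerSumsOn (hx₀ : 0 < x₀) (hf : f ∈ powerSumsOn x₀ a) :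
    ∃ C > 0, ∀ x, x₀ ≤ x → |f x| ≤ C * x ^ a := by
  induction hf using Submodule.span_induction with
  | mem f hf =>
    obtain ⟨p, hp, hfp⟩ := hf
    refine ⟨x₀ ^ (p - a), by positivity, fun x hx => ?_⟩
    have hx0 : 0 < x := hx₀.trans_le hx
    calc |f x| = x ^ (p - a) * x ^ a := by
          rw [hfp hx, ← rpow_add hx0, sub_add_cancel, abs_of_pos (rpow_pos_of_pos hx0 p)]
      _ ≤ x₀ ^ (p - a) * x ^ a :=
          mul_le_mul_of_nonneg_right (rpow_le_rpow_of_nonpos hx₀ hx (sub_nonpos.mpr hp))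
            (rpow_nonneg hx0.le a)
  | zero =>
    exact ⟨1, one_pos, fun x hx => by simpa using rpow_nonneg (hx₀.trans_le hx).le a⟩
  | add f g _ _ hf hg =>
    obtain ⟨C, hC, hfC⟩ := hf
    obtain ⟨D, hD, hgD⟩ := hg
    exact ⟨C + D, by positivity, fun x hx =>
      (abs_add_le _ _).trans (by rw [add_mul]; exact add_le_add (hfC x hx) (hgD x hx))⟩
  | smul c f _ hf =>
    obtain ⟨C, hC, hfC⟩ := hf
    refine ⟨|c| * C + 1, by positivity, fun x hx => ?_⟩
    have hxa : 0 < x ^ a := rpow_pos_of_pos (hx₀.trans_le hx) a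
    calc |(c • f) x| = |c| * |f x| := by simp [abs_mul]
      _ ≤ |c| * (C * x ^ a) := by gcongr; exact hfC x hx
      _ ≤ (|c| * C + 1) * x ^ a := by nlinarith

theorem mul_mem_powerSumsOn (hx₀ : 0 < x₀) (hf : f ∈ powerSumsOn x₀ a)
    (hg : g ∈ powerSumsOn x₀ b) : f * g ∈ powerSumsOn x₀ (a + b) := by
  induction hf, hg using Submodule.span_induction₂ with
  | mem_mem f g hf hg =>
    obtain ⟨p, hp, hfp⟩ := hf
    obtain ⟨q, hq, hgq⟩ := hg
    refine Submodule.subset_span ⟨p + q, add_le_add hp hq, fun x hx => ?_⟩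
    simp [hfp hx, hgq hx, rpow_add (hx₀.trans_le hx)]
  | zero_left => simp
  | zero_right => simp
  | add_left => simp [add_mul, add_mem, *]
  | add_right => simp [mul_add, add_mem, *]
  | smul_left c f g _ _ h =>
    rw [smul_mul_assoc]; exact Submodule.smul_mem _ c h
  | smul_right c f g _ _ h =>
    rw [mul_smul_comm]; exact Submodule.smul_mem _ c h

theorem continuousOn_of_mem_powerSumsOn (hx₀ : 0 < x₀) (hf : f ∈ powerSumsOn x₀ a) :
    ContinuousOn f (Ici x₀) := by
  induction hf using Submodule.span_induction with
  | mem f hf =>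
    obtain ⟨p, -, hfp⟩ := hf
    refine ContinuousOn.congr (fun x hx => ?_) hfp
    exact (continuousAt_rpow_const x p (Or.inl (hx₀.trans_le hx).ne')).continuousWithinAt
  | zero => exact continuousOn_const
  | add f g _ _ hf hg => exact hf.add hg
  | smul c f _ hf => exact hf.const_smul c

theorem exists_hasDerivAt_of_mem_powerSumsOn (hx₀ : 0 < x₀) (hf : f ∈ powerSumsOn x₀ a) :
    ∃ f' ∈ powerSumsOn x₀ (a - 1), ∀ x, x₀ < x → HasDerivAt f (f' x) x := by
  induction hf using Submodule.span_induction with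
  | mem f hf =>
    obtain ⟨p, hp, hfp⟩ := hf
    refine ⟨p • fun x => x ^ (p - 1),
      Submodule.smul_mem _ p (rpow_mem_powerSumsOn (by linarith)), fun x hx => ?_⟩
    have hev : (fun x => x ^ p) =ᶠ[nhds x] f :=
      Filter.mem_of_superset (Ioi_mem_nhds hx) fun y (hy : x₀ < y) => (hfp hy.le).symm
    exact (hasDerivAt_rpow_const (Or.inl (hx₀.trans hx).ne')).congr_of_eventuallyEq hev.symm
  | zero => exact ⟨0, zero_mem _, fun x _ => hasDerivAt_const x 0⟩
  | add f g _ _ hf hg =>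
    obtain ⟨f', hf', hff'⟩ := hf
    obtain ⟨g', hg', hgg'⟩ := hg
    exact ⟨f' + g', add_mem hf' hg', fun x hx => (hff' x hx).add (hgg' x hx)⟩
  | smul c f _ hf =>
    obtain ⟨f', hf', hff'⟩ := hf
    exact ⟨c • f', Submodule.smul_mem _ c hf', fun x hx => (hff' x hx).const_smul c⟩

theorem mem_powerSumsOn_of_hasDerivAt {f' : ℝ → ℝ} (hx₀ : 0 < x₀) (hf : f ∈ powerSumsOn x₀ a)
    (hd : ∀ x, x₀ < x → HasDerivAt f (f' x) x) (hc : ContinuousOn f' (Ici x₀)) :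
    f' ∈ powerSumsOn x₀ (a - 1) := by
  obtain ⟨g', hg', hfg'⟩ := exists_hasDerivAt_of_mem_powerSumsOn hx₀ hf
  refine mem_powerSumsOn_of_eqOn hg' ?_
  refine EqOn.of_subset_closure (fun x hx => (hfg' x hx).unique (hd x hx))
    (continuousOn_of_mem_powerSumsOn hx₀ hg') hc Ioi_subset_Ici_self (closure_Ioi x₀).ge

end PowerSums

theorem abs_le_mul_log_sub_log {F F' : ℝ → ℝ} {x₀ C : ℝ} (hx₀ : 0 < x₀)
    (hF : ∀ x, x₀ ≤ x → HasDerivAt F (F' x) x) (hF₀ : F x₀ = 0)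
    (hF' : ∀ x, x₀ ≤ x → |F' x| ≤ C * x⁻¹) {x : ℝ} (hx : x₀ ≤ x) :
    |F x| ≤ C * (log x - log x₀) := by
  refine image_norm_le_of_norm_deriv_right_le_deriv_boundary' (b := x)
    (B := fun y => C * (log y - log x₀)) (B' := fun y => C * y⁻¹)
    (fun y hy => (hF y hy.1).continuousAt.continuousWithinAt)
    (fun y hy => (hF y hy.1).hasDerivWithinAt) (by simp [hF₀])
    (fun y hy => ?_) (fun y hy => ?_) (fun y hy => hF' y hy.1) ⟨hx, le_rfl⟩
  · have hy₀ : y ≠ 0 := (hx₀.trans_le hy.1).ne'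
    exact (((continuousAt_log hy₀).sub continuousAt_const).const_mul C).continuousWithinAt
  · have hy₀ : y ≠ 0 := (hx₀.trans_le hy.1).ne'
    exact (((hasDerivAt_log hy₀).sub_const (log x₀)).const_mul C).hasDerivWithinAt

theorem exists_mul_log_sub_log_le {C : ℝ} (hC : 0 < C) (x₀ : ℝ) :
    ∃ C' > 0, ∀ x, 2 ≤ x → C * (log x - log x₀) ≤ C' * log x := by
  have hlog2 : 0 < log 2 := log_pos one_lt_two
  refine ⟨C * (1 + |log x₀| / log 2), by positivity, fun x hx => ?_⟩
  have hlogx : log 2 ≤ log x := log_le_log two_pos hx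
  have : |log x₀| ≤ |log x₀| / log 2 * log x := by
    rw [div_mul_eq_mul_div, le_div_iff₀ hlog2]
    exact mul_le_mul_of_nonneg_left hlogx (abs_nonneg _)
  nlinarith [neg_abs_le (log x₀)]

namespace WKBHierarchy

variable {γ lam xstar : ℝ} {S S' S'' : ℕ → ℝ → ℝ}

theorem deriv_one_mem_powerSumsOn (hx : 0 < xstar) (hS : WKBHierarchy γ lam xstar S S' S'') :
    S' 1 ∈ powerSumsOn xstar (-γ) := by
  refine mem_powerSumsOn_of_eqOn (Submodule.smul_mem _ lam (rpow_mem_powerSumsOn le_rfl))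
    fun x hx' => ?_
  have hxpos : 0 < x := hx.trans_le hx'
  have hcont : ContinuousOn (fun s => lam / s ^ γ) (Ioi 0) := fun s (hs : 0 < s) =>
    (continuousAt_const.div (continuousAt_rpow_const s γ (Or.inl hs.ne'))
      (rpow_pos_of_pos hs γ).ne').continuousWithinAt
  have hS1 : HasDerivAt (S 1) (lam / x ^ γ) x := by
    rw [funext hS.S1_def]
    refine intervalIntegral.integral_hasDerivAt_right ?_
      (hcont.stronglyMeasurableAtFilter isOpen_Ioi x hxpos)
      (hcont.continuousAt (Ioi_mem_nhds hxpos))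
    refine (hcont.mono fun s hs => ?_).intervalIntegrable
    rw [uIcc_of_le hx'] at hs
    exact hx.trans_le hs.1
  rw [(hS.deriv1 1 x hx').unique hS1]
  simp [rpow_neg hxpos.le, div_eq_mul_inv]

theorem eqOn_deriv (hx : 0 < xstar) (hS : WKBHierarchy γ lam xstar S S' S'') {k : ℕ}
    (hk : 2 ≤ k) :
    EqOn (S' k) ((fun x => x ^ (-γ)) * (S'' (k - 1) + ∑ j ∈ Finset.Ico 1 k, S' j * S' (k - j)))
      (Ici xstar) := fun x hx' => by
  simp only [Pi.mul_apply, Pi.add_apply, Finset.sum_apply]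
  rw [hS.recurrence k hk x hx', rpow_neg (hx.trans_le hx').le]
  ring

theorem deriv_mem_powerSumsOn (hx : 0 < xstar) (hS : WKBHierarchy γ lam xstar S S' S'') :
    ∀ k : ℕ, 1 ≤ k → S' k ∈ powerSumsOn xstar (-(k * γ + (k - 1) * min γ 1)) := by
  intro k
  induction k using Nat.strong_induction_on with
  | _ k ih =>
  intro hk
  have hμγ : min γ 1 ≤ γ := min_le_left γ 1
  have hμ1 : min γ 1 ≤ 1 := min_le_right γ 1
  obtain rfl | hk2 : k = 1 ∨ 2 ≤ k := by omega
  · simpa using hS.deriv_one_mem_powerSumsOn hx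
  have hS'' : S'' (k - 1) ∈ powerSumsOn xstar (γ + -(k * γ + (k - 1) * min γ 1)) := by
    refine powerSumsOn_mono ?_ (mem_powerSumsOn_of_hasDerivAt hx
      (ih (k - 1) (by omega) (by omega)) (fun x hx' => hS.deriv2 _ x hx'.le) (hS.cont2 _))
    push_cast [Nat.cast_sub (by omega : 1 ≤ k)]
    linarith
  have hsum : ∑ j ∈ Finset.Ico 1 k, S' j * S' (k - j) ∈
      powerSumsOn xstar (γ + -(k * γ + (k - 1) * min γ 1)) := by
    refine Submodule.sum_mem _ fun j hj => ?_
    rw [Finset.mem_Ico] at hj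
    refine powerSumsOn_mono ?_
      (mul_mem_powerSumsOn hx (ih j hj.2 hj.1) (ih (k - j) (by omega) (by omega)))
    push_cast [Nat.cast_sub hj.2.le]
    linarith
  have := mul_mem_powerSumsOn hx (rpow_mem_powerSumsOn (le_refl (-γ))) (add_mem hS'' hsum)
  rw [neg_add_cancel_left] at this
  exact mem_powerSumsOn_of_eqOn this (hS.eqOn_deriv hx hk2).symm

end WKBHierarchy

theorem stmt4_general (γ lam xstar : ℝ) (hx : 0 < xstar)
    (S S' S'' : ℕ → ℝ → ℝ) (hS : WKBHierarchy γ lam xstar S S' S'') :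
    (∀ k : ℕ, 2 ≤ k → ∃ C : ℝ, 0 < C ∧ ∀ x, xstar ≤ x →
      (γ ≤ 1 → |S' k x| ≤ C * x ^ (-((2 * (k : ℝ) - 1) * γ))) ∧
      (1 < γ → |S' k x| ≤ C * x ^ (-((k : ℝ) * γ + (k : ℝ) - 1)))) ∧
    (∀ k : ℕ, 2 ≤ k → γ = 1 / (2 * (k : ℝ) - 1) →
      ∃ C : ℝ, 0 < C ∧ ∃ X : ℝ, max xstar 2 ≤ X ∧
        ∀ x, X ≤ x → |S k x| ≤ C * Real.log x) := by
  refine ⟨fun k hk => ?_, fun k hk hres => ?_⟩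
  · obtain ⟨C, hC, hbound⟩ :=
      exists_abs_le_rpow_of_mem_powerSumsOn hx (hS.deriv_mem_powerSumsOn hx k (by omega))
    refine ⟨C, hC, fun x hx' => ⟨fun hγ => ?_, fun hγ => ?_⟩⟩
    · convert hbound x hx' using 4
      rw [min_eq_left hγ]; ring
    · convert hbound x hx' using 4
      rw [min_eq_right hγ.le]; ring
  · have hk' : (2 : ℝ) ≤ k := by exact_mod_cast hk
    have hexp : -((k : ℝ) * γ + (k - 1) * min γ 1) = -1 := by
      have hne : 2 * (k : ℝ) - 1 ≠ 0 := by linarith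
      rw [min_eq_left (by rw [hres, div_le_one (by linarith)]; linarith), hres, ← add_mul,
        mul_one_div, show (k : ℝ) + (k - 1) = 2 * k - 1 by ring, div_self hne]
    obtain ⟨C, hC, hbound⟩ :=
      exists_abs_le_rpow_of_mem_powerSumsOn hx (hS.deriv_mem_powerSumsOn hx k (by omega))
    obtain ⟨C', hC', hlog⟩ := exists_mul_log_sub_log_le hC xstar
    refine ⟨C', hC', max xstar 2, le_rfl, fun x hx' => ?_⟩
    refine (abs_le_mul_log_sub_log hx (hS.deriv1 k) (hS.init k hk) (fun y hy => ?_)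
      (le_of_max_le_left hx')).trans (hlog x (le_of_max_le_right hx'))
    simpa [hexp, rpow_neg_one] using hbound y hy

/-- **Decay of the WKB correction terms.**  For every `k ≥ 2` there is `C_k > 0`
with `|S_k'(x)| ≤ C_k·x^{−(2k−1)γ}` for `0 < γ ≤ 1` and
`|S_k'(x)| ≤ C_k·x^{−(kγ+k−1)}` for `γ > 1`, on `[x*,∞)`.  In the resonant case
`γ = 1/(2k−1)` one moreover has `|S_k(x)| ≤ C_k·log x` for all large `x`. -/
theorem stmt4 (γ lam xstar : ℝ) (hγ : 0 < γ) (hlam : 0 < lam) (hx : 0 < xstar)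
    (hturn : ∀ x, xstar ≤ x → 0 ≤ (x ^ γ) ^ 2 / 4 - (γ * x ^ (γ - 1)) / 2 - lam)
    (S S' S'' : ℕ → ℝ → ℝ) (hS : WKBHierarchy γ lam xstar S S' S'') :
    (∀ k : ℕ, 2 ≤ k → ∃ C : ℝ, 0 < C ∧ ∀ x, xstar ≤ x →
      (γ ≤ 1 → |S' k x| ≤ C * x ^ (-((2 * (k : ℝ) - 1) * γ))) ∧
      (1 < γ → |S' k x| ≤ C * x ^ (-((k : ℝ) * γ + (k : ℝ) - 1)))) ∧
    (∀ k : ℕ, 2 ≤ k → γ = 1 / (2 * (k : ℝ) - 1) →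
      ∃ C : ℝ, 0 < C ∧ ∃ X : ℝ, max xstar 2 ≤ X ∧
        ∀ x, X ≤ x → |S k x| ≤ C * Real.log x) :=
  stmt4_general γ lam xstar hx S S' S'' hS
end

section
/- Fix 0<γ<1 and λ>0, and let (S_k') be defined on (0,∞) by S₁'(x) = λ·x^{−γ} and, for k ≥ 2, S_k'(x) = S_{k−1}''(x)/x^γ + (1/x^γ)·Σ_{j=1}^{k−1} S_j'(x)·S_{k−j}'(x). Then for every n ≥ 1 there exist real numbers A_{n,1}, …, A_{n,n} (depending on γ) such that for all x > 0: S_n'(x) = Σ_{i=1}^{n} λ^{i}·A_{n,i}·x^{−((n+i−1)γ + (n−i))}; moreover (−1)^{n−i}·A_{n,i} > 0 for every 1 ≤ i ≤ n, and the leading coefficient satisfies A_{n,n} = (1/n)·binomial(2(n−1), n−1). -/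
/-!
Write `S'_n` as `∑ λ^i A_{n,i} x^{e(n,i)}` with `e(n,i) = -((n+i-1)γ + (n-i))`. The exponents
are additive in the right way: `e(p,a) + e(q,b) - γ = e(p+q,a+b)` and `e(n,i) - 1 - γ = e(n+1,i)`.
Hence `x^{-γ} S'_p S'_q` has this form of order `p+q` with the convolution of the coefficient
vectors, and `x^{-γ} (S'_n)'` has it of order `n+1` with coefficients `e(n,i) A_{n,i}`, so the
recursion closes up. Since `e(n,i) < 0` and the sign `(-1)^{n-i}` is multiplicative under
convolution, `(-1)^{n+1-i} A_{n+1,i}` is a positive derivative term plus nonnegative products.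
The top coefficient receives only products, `A_{n+1,n+1} = ∑_j A_{j,j} A_{n+1-j,n+1-j}`: this is
the Catalan recursion, and `C_{n-1} = binom(2(n-1), n-1)/n`.
-/

open Real Finset

noncomputable def wkbExponent (γ : ℝ) (n i : ℕ) : ℝ :=
  -(((n : ℝ) + (i : ℝ) - 1) * γ + ((n : ℝ) - (i : ℝ)))

lemma wkbExponent_succ (γ : ℝ) (n i : ℕ) :
    wkbExponent γ (n + 1) i = wkbExponent γ n i - 1 - γ := by
  simp only [wkbExponent]; push_cast; ring

lemma wkbExponent_add (γ : ℝ) {p q n : ℕ} (h : p + q = n) (a b : ℕ) :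
    wkbExponent γ n (a + b) = wkbExponent γ p a + wkbExponent γ q b - γ := by
  subst h; simp only [wkbExponent]; push_cast; ring

lemma wkbExponent_neg {γ : ℝ} (hγ : 0 < γ) {n i : ℕ} (hi : i ∈ Icc 1 n) :
    wkbExponent γ n i < 0 := by
  rw [mem_Icc] at hi
  have h1 : (1 : ℝ) ≤ i := by exact_mod_cast hi.1
  have h2 : (i : ℝ) ≤ n := by exact_mod_cast hi.2
  have : 0 < ((n : ℝ) + i - 1) * γ := mul_pos (by linarith) hγ
  simp only [wkbExponent]; linarith

def HasWKBForm (γ lam : ℝ) (n : ℕ) (f : ℝ → ℝ) (A : ℕ → ℝ) : Prop :=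
  ∀ x : ℝ, 0 < x → f x = ∑ i ∈ Icc 1 n, lam ^ i * A i * x ^ wkbExponent γ n i

/-- The coefficient of `λ^i` in the product of two WKB sums of orders `p` and `q`. -/
def coeffConv (p q : ℕ) (A B : ℕ → ℝ) (i : ℕ) : ℝ :=
  ∑ a ∈ Icc 1 p, ∑ b ∈ Icc 1 q, if a + b = i then A a * B b else 0

/-- The coefficients of `S'_{n+1}` in terms of the coefficients `B j` of `S'_j`, `j ≤ n`. -/
noncomputable def wkbNextCoeff (γ : ℝ) (n : ℕ) (B : ℕ → ℕ → ℝ) (i : ℕ) : ℝ :=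
  (if i ≤ n then wkbExponent γ n i * B n i else 0)
    + ∑ j ∈ Ico 1 (n + 1), coeffConv j (n + 1 - j) (B j) (B (n + 1 - j)) i

def HasAlternatingSigns (n : ℕ) (A : ℕ → ℝ) : Prop :=
  ∀ i ∈ Icc 1 n, 0 < (-1 : ℝ) ^ (n - i) * A i

lemma deriv_eq_sum_mul_rpow {s : Finset ℕ} {c r : ℕ → ℝ} {f : ℝ → ℝ}
    (hf : ∀ y : ℝ, 0 < y → f y = ∑ i ∈ s, c i * y ^ r i) {x : ℝ} (hx : 0 < x) :
    deriv f x = ∑ i ∈ s, c i * (r i * x ^ (r i - 1)) := by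
  have hfx : f =ᶠ[nhds x] fun y => ∑ i ∈ s, c i * y ^ r i :=
    Filter.eventually_of_mem (Ioi_mem_nhds hx) hf
  rw [hfx.deriv_eq]
  exact (HasDerivAt.fun_sum fun i _ =>
    (hasDerivAt_rpow_const (Or.inl hx.ne')).const_mul (c i)).deriv

lemma sum_sum_mul_eq_sum_coeffConv {p q n : ℕ} (h : p + q = n) (A B w : ℕ → ℝ) :
    ∑ a ∈ Icc 1 p, ∑ b ∈ Icc 1 q, A a * B b * w (a + b) =
      ∑ i ∈ Icc 1 n, coeffConv p q A B i * w i := by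
  simp only [coeffConv, sum_mul, ite_mul, zero_mul]
  conv_rhs => rw [sum_comm]
  refine sum_congr rfl fun a ha => ?_
  conv_rhs => rw [sum_comm]
  refine sum_congr rfl fun b hb => ?_
  rw [mem_Icc] at ha hb
  rw [sum_ite_eq, if_pos (mem_Icc.2 ⟨by omega, by omega⟩)]

namespace HasWKBForm

variable {γ lam : ℝ} {n : ℕ} {f : ℝ → ℝ} {A : ℕ → ℝ}

lemma deriv_div_rpow (hf : HasWKBForm γ lam n f A) {x : ℝ} (hx : 0 < x) :
    deriv f x / x ^ γ =
      ∑ i ∈ Icc 1 n, lam ^ i * (wkbExponent γ n i * A i) * x ^ wkbExponent γ (n + 1) i := by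
  rw [deriv_eq_sum_mul_rpow hf hx, sum_div]
  refine sum_congr rfl fun i _ => ?_
  rw [wkbExponent_succ, rpow_sub hx (wkbExponent γ n i - 1)]
  ring

lemma mul_div_rpow {p q : ℕ} {g : ℝ → ℝ} {B : ℕ → ℝ} (hf : HasWKBForm γ lam p f A)
    (hg : HasWKBForm γ lam q g B) (hpq : p + q = n) {x : ℝ} (hx : 0 < x) :
    1 / x ^ γ * (f x * g x) =
      ∑ i ∈ Icc 1 n, lam ^ i * coeffConv p q A B i * x ^ wkbExponent γ n i := by
  have hterm : ∀ a b : ℕ, lam ^ a * A a * x ^ wkbExponent γ p a *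
      (lam ^ b * B b * x ^ wkbExponent γ q b) / x ^ γ =
        A a * B b * (lam ^ (a + b) * x ^ wkbExponent γ n (a + b)) := by
    intro a b
    rw [wkbExponent_add γ hpq, rpow_sub hx, rpow_add hx, pow_add]
    ring
  rw [hf x hx, hg x hx, sum_mul_sum, one_div_mul_eq_div, sum_div]
  simp_rw [sum_div, hterm]
  refine (sum_sum_mul_eq_sum_coeffConv hpq A B
    fun i => lam ^ i * x ^ wkbExponent γ n i).trans ?_
  exact sum_congr rfl fun i _ => by ring

end HasWKBForm

lemma hasWKBForm_succ {γ lam : ℝ} {n : ℕ} (hn : 1 ≤ n) {S' : ℕ → ℝ → ℝ} {B : ℕ → ℕ → ℝ}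
    (hB : ∀ j ∈ Icc 1 n, HasWKBForm γ lam j (S' j) (B j))
    (hrec : ∀ x : ℝ, 0 < x → S' (n + 1) x = deriv (S' n) x / x ^ γ
        + (1 / x ^ γ) * ∑ j ∈ Ico 1 (n + 1), S' j x * S' (n + 1 - j) x) :
    HasWKBForm γ lam (n + 1) (S' (n + 1)) (wkbNextCoeff γ n B) := by
  intro x hx
  have hderiv : ∑ i ∈ Icc 1 (n + 1),
      lam ^ i * (if i ≤ n then wkbExponent γ n i * B n i else 0) * x ^ wkbExponent γ (n + 1) i =
        deriv (S' n) x / x ^ γ := by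
    rw [sum_Icc_succ_top (by omega), if_neg (by omega), mul_zero, zero_mul, add_zero,
      (hB n (mem_Icc.2 ⟨hn, le_rfl⟩)).deriv_div_rpow hx]
    exact sum_congr rfl fun i hi => by rw [if_pos (mem_Icc.1 hi).2]
  have hprod : ∑ i ∈ Icc 1 (n + 1), lam ^ i *
      (∑ j ∈ Ico 1 (n + 1), coeffConv j (n + 1 - j) (B j) (B (n + 1 - j)) i) *
        x ^ wkbExponent γ (n + 1) i =
      1 / x ^ γ * ∑ j ∈ Ico 1 (n + 1), S' j x * S' (n + 1 - j) x := by
    simp only [mul_sum, sum_mul]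
    rw [sum_comm]
    refine sum_congr rfl fun j hj => ?_
    rw [mem_Ico] at hj
    rw [(hB j (mem_Icc.2 ⟨hj.1, by omega⟩)).mul_div_rpow
      (hB (n + 1 - j) (mem_Icc.2 ⟨by omega, by omega⟩))
      (show j + (n + 1 - j) = n + 1 by omega) hx]
  simp only [wkbNextCoeff, mul_add, add_mul, sum_add_distrib, hderiv, hprod, hrec x hx]

lemma coeffConv_of_add_eq {p q n : ℕ} (hp : 1 ≤ p) (hq : 1 ≤ q) (h : p + q = n)
    (A B : ℕ → ℝ) : coeffConv p q A B n = A p * B q := by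
  subst h
  unfold coeffConv
  rw [sum_eq_single_of_mem p (mem_Icc.2 ⟨hp, le_rfl⟩), sum_eq_single_of_mem q
    (mem_Icc.2 ⟨hq, le_rfl⟩), if_pos rfl]
  · intro b hb hbq
    rw [if_neg (by rw [mem_Icc] at hb; omega)]
  · intro a ha hap
    exact sum_eq_zero fun b hb => if_neg (by rw [mem_Icc] at ha hb; omega)

lemma HasAlternatingSigns.coeffConv_nonneg {p q : ℕ} {A B : ℕ → ℝ}
    (hA : HasAlternatingSigns p A) (hB : HasAlternatingSigns q B) (i : ℕ) :
    0 ≤ (-1 : ℝ) ^ (p + q - i) * coeffConv p q A B i := by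
  unfold coeffConv
  simp only [mul_sum, mul_ite, mul_zero]
  refine sum_nonneg fun a ha => sum_nonneg fun b hb => ?_
  split_ifs with hab
  · have hsplit : p + q - i = (p - a) + (q - b) := by rw [mem_Icc] at ha hb; omega
    rw [hsplit, pow_add]
    nlinarith [hA a ha, hB b hb]
  · exact le_rfl

lemma catalan_pos (n : ℕ) : 0 < catalan n :=
  Nat.pos_of_mul_pos_left (succ_mul_catalan_eq_centralBinom n ▸ Nat.centralBinom_pos n)

lemma sum_Ico_catalan_mul_catalan {n : ℕ} (hn : 1 ≤ n) :
    ∑ j ∈ Ico 1 (n + 1), catalan (j - 1) * catalan (n - j) = catalan n := by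
  obtain ⟨m, rfl⟩ := Nat.exists_eq_add_of_le' hn
  rw [sum_Ico_eq_sum_range, catalan_succ', Nat.sum_antidiagonal_eq_sum_range_succ_mk]
  refine sum_congr rfl fun k hk => ?_
  rw [mem_range] at hk
  rw [show 1 + k - 1 = k by omega, show m + 1 - (1 + k) = m - k by omega]

lemma catalan_pred_eq_choose_div {n : ℕ} (hn : 1 ≤ n) :
    (catalan (n - 1) : ℝ) = (Nat.choose (2 * (n - 1)) (n - 1) : ℝ) / (n : ℝ) := by
  obtain ⟨m, rfl⟩ := Nat.exists_eq_add_of_le' hn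
  rw [Nat.add_sub_cancel, eq_div_iff (by positivity), ← Nat.centralBinom_eq_two_mul_choose,
    ← succ_mul_catalan_eq_centralBinom]
  push_cast
  ring

section wkbNextCoeff

variable {γ : ℝ} {n : ℕ} {B : ℕ → ℕ → ℝ}

lemma wkbNextCoeff_succ_self (hn : 1 ≤ n)
    (hB : ∀ j ∈ Icc 1 n, B j j = catalan (j - 1)) :
    wkbNextCoeff γ n B (n + 1) = catalan n := by
  have hterm : ∀ j ∈ Ico 1 (n + 1), coeffConv j (n + 1 - j) (B j) (B (n + 1 - j)) (n + 1) =
      (catalan (j - 1) * catalan (n - j) : ℕ) := by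
    intro j hj
    rw [mem_Ico] at hj
    rw [coeffConv_of_add_eq hj.1 (by omega) (by omega), hB j (mem_Icc.2 ⟨hj.1, by omega⟩),
      hB (n + 1 - j) (mem_Icc.2 ⟨by omega, by omega⟩), show n + 1 - j - 1 = n - j by omega]
    push_cast
    rfl
  rw [wkbNextCoeff, if_neg (by omega), zero_add, sum_congr rfl hterm, ← Nat.cast_sum,
    sum_Ico_catalan_mul_catalan hn]

lemma hasAlternatingSigns_wkbNextCoeff (hγ : 0 < γ) (hn : 1 ≤ n)
    (hsigns : ∀ j ∈ Icc 1 n, HasAlternatingSigns j (B j))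
    (hlead : ∀ j ∈ Icc 1 n, B j j = catalan (j - 1)) :
    HasAlternatingSigns (n + 1) (wkbNextCoeff γ n B) := by
  intro i hi
  rcases (mem_Icc.1 hi).2.lt_or_eq with hin | rfl
  · have hin : i ≤ n := Nat.lt_succ_iff.1 hin
    have hi' : i ∈ Icc 1 n := mem_Icc.2 ⟨(mem_Icc.1 hi).1, hin⟩
    have hderiv : 0 < (-1 : ℝ) ^ (n + 1 - i) * (wkbExponent γ n i * B n i) := by
      rw [show n + 1 - i = n - i + 1 by omega, pow_succ]
      nlinarith [wkbExponent_neg hγ hi', hsigns n (mem_Icc.2 ⟨hn, le_rfl⟩) i hi']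
    have hprod : 0 ≤ (-1 : ℝ) ^ (n + 1 - i) *
        ∑ j ∈ Ico 1 (n + 1), coeffConv j (n + 1 - j) (B j) (B (n + 1 - j)) i := by
      rw [mul_sum]
      refine sum_nonneg fun j hj => ?_
      rw [mem_Ico] at hj
      have hsum : j + (n + 1 - j) = n + 1 := by omega
      have := (hsigns j (mem_Icc.2 ⟨hj.1, by omega⟩)).coeffConv_nonneg
        (hsigns (n + 1 - j) (mem_Icc.2 ⟨by omega, by omega⟩)) i
      rwa [hsum] at this
    rw [wkbNextCoeff, if_pos hin, mul_add]
    exact add_pos_of_pos_of_nonneg hderiv hprod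
  · rw [wkbNextCoeff_succ_self hn hlead, Nat.sub_self, pow_zero, one_mul]
    exact_mod_cast catalan_pos n

end wkbNextCoeff

theorem exists_wkb_coeffs {γ lam : ℝ} (hγ : 0 < γ) {S' : ℕ → ℝ → ℝ}
    (hS1 : ∀ x : ℝ, 0 < x → S' 1 x = lam * x ^ (-γ))
    (hrec : ∀ k : ℕ, 2 ≤ k → ∀ x : ℝ, 0 < x →
      S' k x = deriv (S' (k - 1)) x / x ^ γ
        + (1 / x ^ γ) * ∑ j ∈ Ico 1 k, S' j x * S' (k - j) x) :
    ∀ n : ℕ, 1 ≤ n → ∃ A : ℕ → ℝ,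
      HasWKBForm γ lam n (S' n) A ∧ HasAlternatingSigns n A ∧ A n = catalan (n - 1) := by
  intro n
  induction n using Nat.strong_induction_on with
  | _ n IH =>
  intro hn
  rcases hn.eq_or_lt with rfl | hn
  · refine ⟨fun _ => 1, fun x hx => ?_, fun i hi => ?_, by simp⟩
    · simp [hS1 x hx, wkbExponent]
    · obtain rfl : i = 1 := by rw [mem_Icc] at hi; omega
      norm_num
  · obtain ⟨m, rfl⟩ : ∃ m, n = m + 1 := ⟨n - 1, by omega⟩
    have hm : 1 ≤ m := by omega
    have hprev : ∀ j, ∃ B : ℕ → ℝ, j ∈ Icc 1 m →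
        HasWKBForm γ lam j (S' j) B ∧ HasAlternatingSigns j B ∧ B j = catalan (j - 1) := by
      intro j
      by_cases hj : j ∈ Icc 1 m
      · obtain ⟨B, hB⟩ := IH j (by rw [mem_Icc] at hj; omega) (mem_Icc.1 hj).1
        exact ⟨B, fun _ => hB⟩
      · exact ⟨0, fun h => absurd h hj⟩
    choose B hB using hprev
    exact ⟨wkbNextCoeff γ m B,
      hasWKBForm_succ hm (fun j hj => (hB j hj).1) (hrec (m + 1) (by omega)),
      hasAlternatingSigns_wkbNextCoeff hγ hm (fun j hj => (hB j hj).2.1)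
        (fun j hj => (hB j hj).2.2),
      wkbNextCoeff_succ_self hm fun j hj => (hB j hj).2.2⟩

theorem stmt16_general (γ lam : ℝ) (hγ0 : 0 < γ)
    (S' : ℕ → ℝ → ℝ)
    (hS1 : ∀ x : ℝ, 0 < x → S' 1 x = lam * x ^ (-γ))
    (hrec : ∀ k : ℕ, 2 ≤ k → ∀ x : ℝ, 0 < x →
      S' k x = deriv (S' (k - 1)) x / x ^ γ
        + (1 / x ^ γ) * ∑ j ∈ Finset.Ico 1 k, S' j x * S' (k - j) x) :
    ∀ n : ℕ, 1 ≤ n → ∃ A : ℕ → ℝ,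
      (∀ x : ℝ, 0 < x →
        S' n x = ∑ i ∈ Finset.Icc 1 n,
          lam ^ i * A i
            * x ^ (-(((n : ℝ) + (i : ℝ) - 1) * γ + ((n : ℝ) - (i : ℝ))))) ∧
      (∀ i ∈ Finset.Icc 1 n, 0 < (-1 : ℝ) ^ (n - i) * A i) ∧
      A n = (Nat.choose (2 * (n - 1)) (n - 1) : ℝ) / (n : ℝ) := by
  intro n hn
  obtain ⟨A, hform, hsigns, hlead⟩ := exists_wkb_coeffs hγ0 hS1 hrec n hn
  exact ⟨A, hform, hsigns, hlead.trans (catalan_pred_eq_choose_div hn)⟩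

/-- **General structure of the WKB terms `S_n'` for `0 < γ < 1`.**  With
`S₁'(x) = λ·x^{−γ}` and the recursion
`S_k' = (S_{k−1}')'/x^γ + x^{−γ}·Σ_{j=1}^{k−1} S_j'·S_{k−j}'`, each `S_n'` is a
sum `Σ_{i=1}^n λ^i·A_{n,i}·x^{−((n+i−1)γ+(n−i))}` with signs
`sign(A_{n,i}) = (−1)^{n−i}` and leading coefficient
`A_{n,n} = (1/n)·C(2(n−1), n−1)`. -/
theorem stmt16 (γ lam : ℝ) (hγ0 : 0 < γ) (hγ1 : γ < 1) (hlam : 0 < lam)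
    (S' : ℕ → ℝ → ℝ)
    (hdiff : ∀ k, DifferentiableOn ℝ (S' k) (Set.Ioi 0))
    (hS1 : ∀ x : ℝ, 0 < x → S' 1 x = lam * x ^ (-γ))
    (hrec : ∀ k : ℕ, 2 ≤ k → ∀ x : ℝ, 0 < x →
      S' k x = deriv (S' (k - 1)) x / x ^ γ
        + (1 / x ^ γ) * ∑ j ∈ Finset.Ico 1 k, S' j x * S' (k - j) x) :
    ∀ n : ℕ, 1 ≤ n → ∃ A : ℕ → ℝ,
      (∀ x : ℝ, 0 < x →
        S' n x = ∑ i ∈ Finset.Icc 1 n,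
          lam ^ i * A i
            * x ^ (-(((n : ℝ) + (i : ℝ) - 1) * γ + ((n : ℝ) - (i : ℝ))))) ∧
      (∀ i ∈ Finset.Icc 1 n, 0 < (-1 : ℝ) ^ (n - i) * A i) ∧
      A n = (Nat.choose (2 * (n - 1)) (n - 1) : ℝ) / (n : ℝ) :=
  stmt16_general γ lam hγ0 S' hS1 hrec
end
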